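/- Let Σ be an n×n symmetric positive-definite real matrix, X an n×p real matrix of full column rank with p < n, and define M := Σ⁻¹ − Σ⁻¹X(XᴴΣ⁻¹X)⁻¹XᴴΣ⁻¹. Let U be an n×(n−p) matrix whose columns form an orthonormal basis of im(X)^⊥. Then pdet(M) = det(UᴴΣU)⁻¹, i.e., the pseudo-determinant of M equals the reciprocal of the determinant of the compression of Σ onto im(X)^⊥. -/

import Mathlib

/-!
Put `B := (UᴴΣU)⁻¹`. Both `M` and `U B Uᴴ` annihilate `X` and send `ΣU` to `U`; since
`UᴴX = 0` and `XᴴΣ⁻¹X`, `UᴴΣU` are invertible, the columns of `[X | ΣU]` are independent, hence a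
basis of `ℝⁿ`, so `M = U B Uᴴ`. The characteristic polynomials of `U (B Uᴴ)` and of
`(B Uᴴ) U = B` differ by a power of the variable, so `M` and `B` have the same nonzero eigenvalues,
and their product is `det B`.
-/

open Matrix
open scoped Classical

/-- The pseudo-determinant of a real square matrix: the product of the nonzero
eigenvalues (roots over `ℂ` of the characteristic polynomial of `M`, with
algebraic multiplicity); the empty product is `1`. -/
noncomputable def pdetR {n : ℕ} (M : Matrix (Fin n) (Fin n) ℝ) : ℂ :=
  (((M.map (Complex.ofReal)).charpoly.roots).filter (fun z => z ≠ 0)).prod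

namespace Polynomial

open scoped Polynomial

variable {R : Type*} [CommRing R] [IsDomain R] [DecidableEq R]

theorem prod_filter_ne_zero_roots_X_pow_mul (k : ℕ) {p : R[X]} (hp : p ≠ 0) :
    ((X ^ k * p).roots.filter (· ≠ 0)).prod = (p.roots.filter (· ≠ 0)).prod := by
  rw [roots_mul (mul_ne_zero (pow_ne_zero _ X_ne_zero) hp), roots_X_pow, Multiset.filter_add,
    Multiset.nsmul_singleton,
    Multiset.filter_eq_nil.2 fun _ h => not_not.2 (Multiset.eq_of_mem_replicate h), zero_add]

end Polynomial

namespace Matrix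

section NonzeroEigenvalues

open Polynomial

variable {m n : Type*} [Fintype m] [Fintype n] [DecidableEq m] [DecidableEq n]

theorem prod_filter_ne_zero_roots_charpoly_mul_comm {R : Type*} [CommRing R] [IsDomain R]
    [DecidableEq R] (A : Matrix m n R) (B : Matrix n m R) :
    ((A * B).charpoly.roots.filter (· ≠ 0)).prod =
      ((B * A).charpoly.roots.filter (· ≠ 0)).prod := by
  have h := congrArg (fun P : R[X] => (P.roots.filter (· ≠ 0)).prod) (charpoly_mul_comm' A B)
  simpa only [prod_filter_ne_zero_roots_X_pow_mul _ (charpoly_monic _).ne_zero] using h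

theorem prod_filter_ne_zero_roots_charpoly_eq_det {K : Type*} [Field K] [IsAlgClosed K]
    [DecidableEq K] {A : Matrix n n K} (hA : A.det ≠ 0) :
    (A.charpoly.roots.filter (· ≠ 0)).prod = A.det := by
  rw [Multiset.filter_eq_self.2, det_eq_prod_roots_charpoly]
  rintro z hz rfl
  have h0 : (0 : K) ∈ spectrum K A :=
    mem_spectrum_iff_isRoot_charpoly.2 (isRoot_of_mem_roots hz)
  exact spectrum.zero_mem_iff K |>.1 h0 <| (isUnit_iff_isUnit_det A).2 hA.isUnit

end NonzeroEigenvalues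

section Compression

variable {K : Type*} [Field K] [StarRing K] {n p q : Type*} [Fintype n] [Fintype p] [Fintype q]
  [DecidableEq n] [DecidableEq p] [DecidableEq q]
  {S : Matrix n n K} {X : Matrix n p K} {U : Matrix n q K}

theorem mulVec_surjective_fromCols_of_conjTranspose_mul_eq_zero
    (hG : IsUnit (Xᴴ * S⁻¹ * X).det) (hUSU : IsUnit (Uᴴ * S * U).det) (hUX : Uᴴ * X = 0)
    (hcard : Fintype.card p + Fintype.card q = Fintype.card n) :
    Function.Surjective (fromCols X (S * U)).mulVec := by
  have hinj : Function.Injective (fromCols X (S * U)).mulVecLin := by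
    rw [← LinearMap.ker_eq_bot, LinearMap.ker_eq_bot']
    intro v hv
    have hsum : X *ᵥ (v ∘ Sum.inl) + (S * U) *ᵥ (v ∘ Sum.inr) = 0 := by
      rwa [← fromCols_mulVec_sumElim, Sum.elim_comp_inl_inr]
    have hr : v ∘ Sum.inr = 0 := by
      apply mulVec_injective_of_isUnit ((isUnit_iff_isUnit_det _).2 hUSU)
      have h := congrArg (Uᴴ *ᵥ ·) hsum
      simp only [mulVec_add, mulVec_mulVec, hUX, zero_mulVec, zero_add, mulVec_zero] at h
      rwa [Matrix.mul_assoc, mulVec_zero]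
    have hl : v ∘ Sum.inl = 0 := by
      rw [hr, mulVec_zero, add_zero] at hsum
      apply mulVec_injective_of_isUnit ((isUnit_iff_isUnit_det _).2 hG)
      have h := congrArg ((Xᴴ * S⁻¹) *ᵥ ·) hsum
      simp only [mulVec_mulVec, mulVec_zero] at h
      rwa [mulVec_zero]
    ext (i | i)
    exacts [congrFun hl i, congrFun hr i]
  exact (LinearMap.injective_iff_surjective_of_finrank_eq_finrank (by simp [hcard])).1 hinj

theorem inv_sub_inv_mul_mul_inv_mul_mul_inv_eq (hS : IsUnit S.det)
    (hG : IsUnit (Xᴴ * S⁻¹ * X).det) (hUSU : IsUnit (Uᴴ * S * U).det) (hUX : Uᴴ * X = 0)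
    (hcard : Fintype.card p + Fintype.card q = Fintype.card n) :
    S⁻¹ - S⁻¹ * X * (Xᴴ * S⁻¹ * X)⁻¹ * Xᴴ * S⁻¹ = U * (Uᴴ * S * U)⁻¹ * Uᴴ := by
  have hXU : Xᴴ * U = 0 := by simpa using congrArg conjTranspose hUX
  have hA := mulVec_surjective_fromCols_of_conjTranspose_mul_eq_zero hG hUSU hUX hcard
  set G := Xᴴ * S⁻¹ * X
  set C := Uᴴ * S * U
  suffices h : (S⁻¹ - S⁻¹ * X * G⁻¹ * Xᴴ * S⁻¹) * fromCols X (S * U) =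
      U * C⁻¹ * Uᴴ * fromCols X (S * U) by
    apply toLin'.injective
    rw [← LinearMap.cancel_right (g := toLin' (fromCols X (S * U))) hA]
    simpa only [← toLin'_mul] using congrArg toLin' h
  rw [mul_fromCols, mul_fromCols]
  congr 1
  · calc (S⁻¹ - S⁻¹ * X * G⁻¹ * Xᴴ * S⁻¹) * X = S⁻¹ * X - S⁻¹ * X * (G⁻¹ * G) := by
          simp only [G, Matrix.sub_mul, Matrix.mul_assoc]
      _ = 0 := by rw [nonsing_inv_mul _ hG, Matrix.mul_one, sub_self]
      _ = U * C⁻¹ * Uᴴ * X := by rw [Matrix.mul_assoc, hUX, Matrix.mul_zero]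
  · calc (S⁻¹ - S⁻¹ * X * G⁻¹ * Xᴴ * S⁻¹) * (S * U)
          = S⁻¹ * S * U - S⁻¹ * X * G⁻¹ * Xᴴ * (S⁻¹ * S * U) := by
          simp only [Matrix.sub_mul, Matrix.mul_assoc]
      _ = U := by
          rw [nonsing_inv_mul _ hS, Matrix.one_mul, Matrix.mul_assoc _ Xᴴ, hXU, Matrix.mul_zero,
            sub_zero]
      _ = U * (C⁻¹ * C) := by rw [nonsing_inv_mul _ hUSU, Matrix.mul_one]
      _ = U * C⁻¹ * Uᴴ * (S * U) := by simp only [C, Matrix.mul_assoc]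

end Compression

theorem mulVec_injective_of_rank_eq_card {K : Type*} [Field K] {m n : Type*} [Fintype n]
    {A : Matrix m n K} (hA : A.rank = Fintype.card n) : Function.Injective A.mulVec := by
  rw [mulVec_injective_iff, linearIndependent_iff_card_eq_finrank_span, Set.finrank,
    ← rank_eq_finrank_span_cols, hA]

theorem conjTranspose_mul_eq_zero_of_range_le_orthogonal {𝕜 : Type*} [RCLike 𝕜]
    {m n p : Type*} [Fintype m] [Fintype n] [Fintype p] [DecidableEq n] [DecidableEq p]
    {U : Matrix m n 𝕜} {X : Matrix m p 𝕜}
    (h : LinearMap.range U.toEuclideanLin ≤ (LinearMap.range X.toEuclideanLin)ᗮ) :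
    Uᴴ * X = 0 := by
  have hker : LinearMap.range X.toEuclideanLin ≤ LinearMap.ker U.toEuclideanLin.adjoint := by
    rw [← LinearMap.orthogonal_range]
    exact Submodule.isOrtho_iff_le.1 (Submodule.isOrtho_comm.1 (Submodule.isOrtho_iff_le.2 h))
  refine toEuclideanLin.injective ?_
  rw [toLpLin_mul_same, toEuclideanLin_conjTranspose_eq_adjoint, map_zero]
  exact LinearMap.range_le_ker_iff.1 hker

end Matrix

theorem pdetR_mul_mul_conjTranspose {n k : ℕ} {U : Matrix (Fin n) (Fin k) ℝ} (hU : Uᴴ * U = 1)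
    {B : Matrix (Fin k) (Fin k) ℝ} (hB : B.det ≠ 0) : pdetR (U * B * Uᴴ) = B.det := by
  have hmap : ∀ {a b c : ℕ} (P : Matrix (Fin a) (Fin b) ℝ) (Q : Matrix (Fin b) (Fin c) ℝ),
      (P * Q).map Complex.ofReal = P.map Complex.ofReal * Q.map Complex.ofReal :=
    fun _ _ => Matrix.map_mul (f := Complex.ofRealHom)
  have hdet : (B.map Complex.ofReal).det = B.det := (RingHom.map_det Complex.ofRealHom B).symm
  rw [pdetR, Matrix.mul_assoc, hmap, prod_filter_ne_zero_roots_charpoly_mul_comm, ← hmap,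
    Matrix.mul_assoc, hU, Matrix.mul_one, prod_filter_ne_zero_roots_charpoly_eq_det, hdet]
  rwa [hdet, Complex.ofReal_ne_zero]

/-- For SPD `Σ`, full-column-rank `X` (`p < n`),
`M = Σ⁻¹ − Σ⁻¹X(XᴴΣ⁻¹X)⁻¹XᴴΣ⁻¹`, and `U` an orthonormal basis matrix of `(im X)ᗮ`,
`pdet M = det (Uᴴ Σ U)⁻¹`. -/
theorem stmt17 {n p : ℕ}
    (S : Matrix (Fin n) (Fin n) ℝ) (hS : S.PosDef)
    (X : Matrix (Fin n) (Fin p) ℝ) (hX : X.rank = p) (hpn : p < n)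
    (M : Matrix (Fin n) (Fin n) ℝ)
    (hM : M = S⁻¹ - S⁻¹ * X * (Xᴴ * S⁻¹ * X)⁻¹ * Xᴴ * S⁻¹)
    (U : Matrix (Fin n) (Fin (n - p)) ℝ) (hU : Uᴴ * U = 1)
    (hUrange : LinearMap.range (Matrix.toEuclideanLin U) =
      (LinearMap.range (Matrix.toEuclideanLin X))ᗮ) :
    pdetR M = (((Uᴴ * S * U).det : ℝ) : ℂ)⁻¹ := by
  have hXinj : Function.Injective X.mulVec :=
    mulVec_injective_of_rank_eq_card (by rw [hX, Fintype.card_fin])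
  have hUinj : Function.Injective U.mulVec :=
    Function.LeftInverse.injective (g := Uᴴ.mulVec) fun v => by
      rw [mulVec_mulVec, hU, one_mulVec]
  have hUSU : (Uᴴ * S * U).det ≠ 0 := (hS.conjTranspose_mul_mul_same hUinj).det_pos.ne'
  have hcompress : M = U * (Uᴴ * S * U)⁻¹ * Uᴴ :=
    hM.trans <| inv_sub_inv_mul_mul_inv_mul_mul_inv_eq hS.det_pos.ne'.isUnit
      (hS.inv.conjTranspose_mul_mul_same hXinj).det_pos.ne'.isUnit hUSU.isUnit
      (conjTranspose_mul_eq_zero_of_range_le_orthogonal hUrange.le)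
      (by simp only [Fintype.card_fin]; omega)
  have hdet : (Uᴴ * S * U)⁻¹.det = (Uᴴ * S * U).det⁻¹ := by
    rw [det_nonsing_inv, Ring.inverse_eq_inv']
  rw [hcompress, pdetR_mul_mul_conjTranspose hU (hdet ▸ inv_ne_zero hUSU), hdet,
    Complex.ofReal_inv]
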